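/- arXiv:0909.0044 — 3 statements merged into one kernel-verified Lean document; each statement's English description precedes it below -/
import Mathlib

section
/- Let h be an affine transformation of R^n that has a fixed point, and let {h^t} be a one-parameter group of affine transformations with h = h^1. Then {h^t} has a fixed point in R^n. -/
/-!
The orbit `t ↦ h t z` of a fixed point `z` of `h 1` is continuous and `1`-periodic, so its
average `∫ t in 0..1, h t z` over one period is invariant under translation of time. Each `h s`
is affine and continuous, hence commutes with averages and maps the orbit to its time-shift
`t ↦ h (t + s) z`; therefore it fixes that average.
-/

open MeasureTheory Set

theorem ContinuousAffineMap.integral_comp_comm {α E F : Type*} [MeasurableSpace α]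
    {μ : Measure α} [IsProbabilityMeasure μ]
    [NormedAddCommGroup E] [NormedSpace ℝ E] [CompleteSpace E]
    [NormedAddCommGroup F] [NormedSpace ℝ F] [CompleteSpace F]
    (A : E →ᴬ[ℝ] F) {f : α → E} (hf : Integrable f μ) :
    ∫ x, A (f x) ∂μ = A (∫ x, f x ∂μ) := by
  calc ∫ x, A (f x) ∂μ = ∫ x, A.contLinear (f x) + A 0 ∂μ := by
        congr with x; exact congrFun A.decomp (f x)
    _ = A.contLinear (∫ x, f x ∂μ) + A 0 := by
        rw [integral_add (A.contLinear.integrable_comp hf) (integrable_const _),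
          A.contLinear.integral_comp_comm hf, integral_const, probReal_univ, one_smul]
    _ = A (∫ x, f x ∂μ) := (congrFun A.decomp _).symm

section OneParameterGroup

variable {E : Type*} [NormedAddCommGroup E] [NormedSpace ℝ E] {h : ℝ → E ≃ᵃ[ℝ] E}

theorem apply_apply_eq_apply_add (h_add : ∀ s t : ℝ, h (s + t) = (h s).trans (h t))
    (s t : ℝ) (z : E) : h s (h t z) = h (t + s) z := by
  rw [h_add]; rfl

theorem periodic_orbit_of_apply_one_eq (h_add : ∀ s t : ℝ, h (s + t) = (h s).trans (h t))
    {z : E} (hz : h 1 z = z) : Function.Periodic (fun t => h t z) 1 := fun t => by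
  show h (t + 1) z = h t z
  rw [add_comm, ← apply_apply_eq_apply_add h_add, hz]

theorem apply_integral_orbit_eq [CompleteSpace E]
    (h_add : ∀ s t : ℝ, h (s + t) = (h s).trans (h t))
    (h_cont : Continuous fun p : ℝ × E => h p.1 p.2) {z : E} (hz : h 1 z = z) (s : ℝ) :
    h s (∫ t in (0 : ℝ)..1, h t z) = ∫ t in (0 : ℝ)..1, h t z := by
  have h_orbit : Continuous fun t => h t z := h_cont.comp (continuous_id.prodMk continuous_const)
  let A : E →ᴬ[ℝ] E := ⟨(h s).toAffineMap, h_cont.comp (continuous_const.prodMk continuous_id)⟩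
  have : IsProbabilityMeasure (volume.restrict (Ioc (0 : ℝ) 1)) := ⟨by simp⟩
  calc h s (∫ t in (0 : ℝ)..1, h t z)
      = ∫ t in (0 : ℝ)..1, h s (h t z) := by
        simp only [intervalIntegral.integral_of_le zero_le_one]
        exact (A.integral_comp_comm h_orbit.integrableOn_Ioc).symm
    _ = ∫ t in (0 : ℝ)..1, h (t + s) z := by simp only [apply_apply_eq_apply_add h_add]
    _ = ∫ t in s..s + 1, h t z := by
        rw [intervalIntegral.integral_comp_add_right (fun t => h t z), zero_add, add_comm]
    _ = ∫ t in (0 : ℝ)..1, h t z := by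
        simpa using (periodic_orbit_of_apply_one_eq h_add hz).intervalIntegral_add_eq s 0

end OneParameterGroup

theorem one_param_affine_group_fixed_point_general
    (n : ℕ)
    (h : ℝ → (EuclideanSpace ℝ (Fin n) ≃ᵃ[ℝ] EuclideanSpace ℝ (Fin n)))
    (h_add : ∀ s t : ℝ, h (s + t) = (h s).trans (h t))
    (h_cont : Continuous fun p : ℝ × EuclideanSpace ℝ (Fin n) => h p.1 p.2)
    (h_fix : ∃ z : EuclideanSpace ℝ (Fin n), h 1 z = z) :
    ∃ z : EuclideanSpace ℝ (Fin n), ∀ t : ℝ, h t z = z := by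
  obtain ⟨z, hz⟩ := h_fix
  exact ⟨_, apply_integral_orbit_eq h_add h_cont hz⟩

/-- If a continuous one-parameter group `{h^t}` of affine transformations of `ℝⁿ`
is such that its time-one map `h = h^1` has a fixed point, then the whole
one-parameter group has a common fixed point in `ℝⁿ`. -/
theorem one_param_affine_group_fixed_point
    (n : ℕ)
    (h : ℝ → (EuclideanSpace ℝ (Fin n) ≃ᵃ[ℝ] EuclideanSpace ℝ (Fin n)))
    (h_zero : h 0 = AffineEquiv.refl ℝ (EuclideanSpace ℝ (Fin n)))
    (h_add : ∀ s t : ℝ, h (s + t) = (h s).trans (h t))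
    (h_cont : Continuous fun p : ℝ × EuclideanSpace ℝ (Fin n) => h p.1 p.2)
    (h_fix : ∃ z : EuclideanSpace ℝ (Fin n), h 1 z = z) :
    ∃ z : EuclideanSpace ℝ (Fin n), ∀ t : ℝ, h t z = z :=
  one_param_affine_group_fixed_point_general n h h_add h_cont h_fix
end

section
/- Let {A^t} be a continuous one-parameter group of linear automorphisms of R^n, and let α : (-δ, δ) → R^n be a C¹ curve with α(0) = 0 such that A^k · α'(0) = α'(0) for every natural number k, and lim_{k→∞} A^k · α(s) = 0 for every s ∈ [0, δ). Then α'(0) = 0. -/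
/-- Let `{A^t}` be a continuous one-parameter group of linear automorphisms of `ℝⁿ`
and `α : (-δ, δ) → ℝⁿ` a `C¹` curve with `α(0) = 0` such that
`A^k • α'(0) = α'(0)` for every `k : ℕ` and `A^k • α(s) → 0` for every `s ∈ [0, δ)`.
Then `α'(0) = 0`. -/
theorem deriv_eq_zero_of_stable_orbit
    (n : ℕ) (δ : ℝ) (hδ : 0 < δ)
    (A : ℝ → ((Fin n → ℝ) ≃ₗ[ℝ] (Fin n → ℝ)))
    (hA0 : A 0 = LinearEquiv.refl ℝ (Fin n → ℝ))
    (hAadd : ∀ s t : ℝ, A (s + t) = (A s).trans (A t))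
    (hAcont : Continuous fun p : ℝ × (Fin n → ℝ) => A p.1 p.2)
    (α : ℝ → (Fin n → ℝ)) (v : Fin n → ℝ)
    (hC1 : ContDiffOn ℝ 1 α (Set.Ioo (-δ) δ))
    (hα0 : α 0 = 0)
    (hderiv : HasDerivAt α v 0)
    (hinv : ∀ k : ℕ, A (k : ℝ) v = v)
    (hstable : ∀ s ∈ Set.Ico (0:ℝ) δ,
      Filter.Tendsto (fun k : ℕ => A (k : ℝ) (α s)) Filter.atTop (nhds 0)) :
    v = 0 := by
  -- The stable set is a linear subspace.
  set S : Submodule ℝ (Fin n → ℝ) :=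
    { carrier := {x | Filter.Tendsto (fun k : ℕ => A (k : ℝ) x) Filter.atTop (nhds 0)}
      add_mem' := by
        intro x y hx hy
        simpa only [Set.mem_setOf_eq, map_add, add_zero] using hx.add hy
      zero_mem' := by
        simpa using (tendsto_const_nhds :
          Filter.Tendsto (fun _ : ℕ => (0 : Fin n → ℝ)) Filter.atTop (nhds 0))
      smul_mem' := by
        intro c x hx
        simpa only [Set.mem_setOf_eq, map_smul, smul_zero] using hx.const_smul c } with hSdef
  have hclosed : IsClosed (S : Set (Fin n → ℝ)) := S.closed_of_finiteDimensional
  -- v is the limit of slopes from the right.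
  have hslope : Filter.Tendsto (slope α 0) (nhdsWithin 0 {(0:ℝ)}ᶜ) (nhds v) :=
    hasDerivAt_iff_tendsto_slope.mp hderiv
  have h1 : Filter.Tendsto (slope α 0) (nhdsWithin 0 (Set.Ioi 0)) (nhds v) :=
    hslope.mono_left (nhdsWithin_mono 0 (fun x hx => by simpa using (ne_of_gt hx)))
  -- slopes eventually lie in S
  have hev : ∀ᶠ s in nhdsWithin (0:ℝ) (Set.Ioi 0), slope α 0 s ∈ (S : Set (Fin n → ℝ)) := by
    have hIco : Set.Ico (0:ℝ) δ ∈ nhdsWithin (0:ℝ) (Set.Ioi 0) := by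
      exact Filter.mem_of_superset
        (Ioo_mem_nhdsGT_of_mem (Set.mem_Ico.mpr ⟨le_refl 0, hδ⟩)) Set.Ioo_subset_Ico_self
    filter_upwards [hIco, self_mem_nhdsWithin] with s hs hs'
    have hαs : α s ∈ S := hstable s hs
    have hne : s ≠ 0 := ne_of_gt hs'
    have : slope α 0 s = s⁻¹ • α s := by
      simp [slope, hα0, vsub_eq_sub]
    rw [this]
    exact S.smul_mem _ hαs
  -- hence v ∈ S
  have hvS : v ∈ S := hclosed.mem_of_tendsto h1 hev
  -- v is fixed, so the constant sequence v tends to 0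
  have hconst : Filter.Tendsto (fun _ : ℕ => v) Filter.atTop (nhds 0) := by
    have := hvS
    simp only [hSdef, Submodule.mem_mk, AddSubmonoid.mem_mk, AddSubsemigroup.mem_mk,
      Set.mem_setOf_eq] at this
    convert this using 1
    funext k
    rw [hinv k]
  exact tendsto_nhds_unique tendsto_const_nhds hconst
end

section
/- Let α : [0,s₀] → R^n be given coordinatewise by αᵢ(s) = Pᵢ(s)/Qᵢ(s) where each Pᵢ, Qᵢ is a real polynomial of degree at most 2 and Qᵢ is nonvanishing on [0,s₀], and suppose ‖α(s)‖∞ ≤ R for all s ∈ [0,s₀] (each |αᵢ(s)| ≤ R). Then the Euclidean length of α, ∫₀^{s₀} ‖α'(s)‖ ds, is at most 8nR. -/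
/-!
The derivative of `Pᵢ/Qᵢ` is `W(Qᵢ, Pᵢ)/Qᵢ²`, where the Wronskian `W(Qᵢ, Pᵢ) = QᵢPᵢ' - Qᵢ'Pᵢ` has
degree at most `3`. Between two consecutive zeros of `αᵢ'` the derivative has constant sign, so
there `∫ |αᵢ'| = |∫ αᵢ'|` is an increment of `αᵢ`, at most `2R`. At most four such pieces give
`∫ |αᵢ'| ≤ 8R`, and `‖α'‖ ≤ ∑ᵢ |αᵢ'|` gives `8nR`.
-/

open Set Polynomial intervalIntegral MeasureTheory
open scoped Finset Interval

section TotalVariation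

variable {f f' : ℝ → ℝ} {a b R : ℝ}

theorem integral_abs_eq_abs_sub_of_forall_ne_zero (hab : a ≤ b)
    (hf : ∀ x ∈ Icc a b, HasDerivAt f (f' x) x) (hf' : IntervalIntegrable f' volume a b)
    (hne : ∀ x ∈ Ioo a b, f' x ≠ 0) :
    ∫ x in a..b, |f' x| = |f b - f a| := by
  rw [← integral_eq_sub_of_hasDerivAt (fun x hx => hf x (uIcc_of_le hab ▸ hx)) hf',
    ← abs_of_nonneg (integral_nonneg hab fun x _ => abs_nonneg (f' x))]
  -- Darboux: a derivative without zeros has constant sign.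
  rcases hasDerivWithinAt_forall_lt_or_forall_gt_of_forall_ne (convex_Ioo a b)
    (fun x hx => (hf x (Ioo_subset_Icc_self hx)).hasDerivWithinAt) hne with hneg | hpos
  · rw [integral_congr_Ioo_of_le hab fun x hx => abs_of_neg (hneg x hx),
      intervalIntegral.integral_neg, abs_neg]
  · rw [integral_congr_Ioo_of_le hab fun x hx => abs_of_pos (hpos x hx)]

theorem integral_abs_le_two_mul_of_forall_ne_zero (hab : a ≤ b)
    (hf : ∀ x ∈ Icc a b, HasDerivAt f (f' x) x) (hf' : IntervalIntegrable f' volume a b)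
    (hR : ∀ x ∈ Icc a b, |f x| ≤ R) (hne : ∀ x ∈ Ioo a b, f' x ≠ 0) :
    ∫ x in a..b, |f' x| ≤ 2 * R := by
  rw [integral_abs_eq_abs_sub_of_forall_ne_zero hab hf hf' hne]
  have hb := hR b (right_mem_Icc.2 hab)
  have ha := hR a (left_mem_Icc.2 hab)
  calc |f b - f a| ≤ |f b| + |f a| := abs_sub _ _
    _ ≤ 2 * R := by linarith

theorem integral_abs_le_of_zeros_subset (T : Finset ℝ) (hab : a ≤ b)
    (hf : ∀ x ∈ Icc a b, HasDerivAt f (f' x) x) (hf' : IntervalIntegrable f' volume a b)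
    (hR : ∀ x ∈ Icc a b, |f x| ≤ R) (hT : ∀ x ∈ Ioo a b, f' x = 0 → x ∈ T) :
    ∫ x in a..b, |f' x| ≤ 2 * (#T + 1) * R := by
  induction T using Finset.induction_on_max generalizing b with
  | empty =>
    simpa using integral_abs_le_two_mul_of_forall_ne_zero hab hf hf' hR
      fun x hx h => by simpa using hT x hx h
  | insert r T hlt ih =>
    have hrT : r ∉ T := fun h => (hlt r h).false
    by_cases hr : r ∈ Ioo a b
    · have hsub_left : [[a, r]] ⊆ [[a, b]] := by
        rw [uIcc_of_le hr.1.le, uIcc_of_le hab]; exact Icc_subset_Icc_right hr.2.le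
      have hsub_right : [[r, b]] ⊆ [[a, b]] := by
        rw [uIcc_of_le hr.2.le, uIcc_of_le hab]; exact Icc_subset_Icc_left hr.1.le
      have hleft := ih hr.1.le (fun x hx => hf x ⟨hx.1, hx.2.trans hr.2.le⟩)
        (hf'.mono_set hsub_left)
        (fun x hx => hR x ⟨hx.1, hx.2.trans hr.2.le⟩)
        fun x hx h => (Finset.mem_insert.1 (hT x ⟨hx.1, hx.2.trans hr.2⟩ h)).resolve_left hx.2.ne
      have hright := integral_abs_le_two_mul_of_forall_ne_zero hr.2.le
        (fun x hx => hf x ⟨hr.1.le.trans hx.1, hx.2⟩)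
        (hf'.mono_set hsub_right)
        (fun x hx => hR x ⟨hr.1.le.trans hx.1, hx.2⟩)
        fun x hx h => by
          rcases Finset.mem_insert.1 (hT x ⟨hr.1.trans hx.1, hx.2⟩ h) with rfl | hx'
          · exact hx.1.false
          · exact (hlt x hx').asymm hx.1
      rw [← integral_add_adjacent_intervals (hf'.mono_set hsub_left).abs
        (hf'.mono_set hsub_right).abs, Finset.card_insert_of_notMem hrT]
      push_cast
      linarith
    · have hR0 : 0 ≤ R := (abs_nonneg _).trans (hR a (left_mem_Icc.2 hab))
      calc ∫ x in a..b, |f' x| ≤ 2 * (#T + 1) * R :=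
            ih hab hf hf' hR fun x hx h =>
              (Finset.mem_insert.1 (hT x hx h)).resolve_left fun hxr => hr (hxr ▸ hx)
        _ ≤ 2 * (#(insert r T) + 1) * R := by
            gcongr
            exact Finset.subset_insert r T

end TotalVariation

section RationalFunction

variable {P Q : ℝ[X]}

theorem hasDerivAt_eval_div_eval {x : ℝ} (hx : Q.eval x ≠ 0) :
    HasDerivAt (fun t => P.eval t / Q.eval t) ((wronskian Q P).eval x / Q.eval x ^ 2) x := by
  refine ((P.hasDerivAt x).fun_div (Q.hasDerivAt x) hx).congr_deriv ?_
  simp only [wronskian, eval_sub, eval_mul]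
  ring

theorem deriv_eval_div_eval {x : ℝ} (hx : Q.eval x ≠ 0) :
    deriv (fun t => P.eval t / Q.eval t) x = (wronskian Q P).eval x / Q.eval x ^ 2 :=
  (hasDerivAt_eval_div_eval hx).deriv

theorem continuousOn_deriv_eval_div_eval {s : Set ℝ} (hQ : ∀ x ∈ s, Q.eval x ≠ 0) :
    ContinuousOn (deriv fun t => P.eval t / Q.eval t) s :=
  ((wronskian Q P).continuousOn.div (Q.continuousOn.pow 2) fun x hx =>
    pow_ne_zero 2 (hQ x hx)).congr fun x hx => deriv_eval_div_eval (hQ x hx)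

theorem integral_abs_deriv_eval_div_eval_le {a b R : ℝ} (hab : a ≤ b)
    (hQ : ∀ x ∈ Icc a b, Q.eval x ≠ 0) (hR : ∀ x ∈ Icc a b, |P.eval x / Q.eval x| ≤ R) :
    ∫ x in a..b, |deriv (fun t => P.eval t / Q.eval t) x| ≤
      2 * (P.natDegree + Q.natDegree) * R := by
  have hR0 : 0 ≤ R := (abs_nonneg _).trans (hR a (left_mem_Icc.2 hab))
  by_cases hW : wronskian Q P = 0
  · have hzero :
        EqOn (fun x => |deriv (fun t => P.eval t / Q.eval t) x|) (fun _ => 0) [[a, b]] :=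
      fun x hx => by simp [deriv_eval_div_eval (hQ x (uIcc_of_le hab ▸ hx)), hW]
    rw [integral_congr hzero, intervalIntegral.integral_zero]
    positivity
  have hroots : #(wronskian Q P).roots.toFinset + 1 ≤ P.natDegree + Q.natDegree :=
    calc #(wronskian Q P).roots.toFinset + 1
        ≤ (wronskian Q P).natDegree + 1 :=
          Nat.add_le_add_right ((Multiset.toFinset_card_le _).trans (card_roots' _)) 1
      _ ≤ P.natDegree + Q.natDegree := by
          have := natDegree_wronskian_lt_add hW; omega
  calc ∫ x in a..b, |deriv (fun t => P.eval t / Q.eval t) x|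
      ≤ 2 * (#(wronskian Q P).roots.toFinset + 1) * R := by
        refine integral_abs_le_of_zeros_subset _ hab
          (fun x hx => (hasDerivAt_eval_div_eval (hQ x hx)).differentiableAt.hasDerivAt)
          ((continuousOn_deriv_eval_div_eval hQ).intervalIntegrable_of_Icc hab) hR
          fun x hx h => ?_
        rw [deriv_eval_div_eval (hQ x (Ioo_subset_Icc_self hx)),
          div_eq_zero_iff, or_iff_left (pow_ne_zero 2 (hQ x (Ioo_subset_Icc_self hx)))] at h
        exact Multiset.mem_toFinset.2 ((mem_roots hW).2 h)
    _ ≤ 2 * (P.natDegree + Q.natDegree) * R := by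
        gcongr 2 * ?_ * R
        exact_mod_cast hroots

end RationalFunction

theorem integral_sqrt_sum_sq_le_sum_integral_abs {ι : Type*} (s : Finset ι) {g : ι → ℝ → ℝ}
    {a b : ℝ} (hab : a ≤ b) (hg : ∀ i ∈ s, IntervalIntegrable (g i) volume a b) :
    ∫ x in a..b, √(∑ i ∈ s, g i x ^ 2) ≤ ∑ i ∈ s, ∫ x in a..b, |g i x| := by
  rw [← integral_finsetSum fun i hi => (hg i hi).abs, integral_of_le hab, integral_of_le hab]
  refine integral_mono_of_nonneg (.of_forall fun x => Real.sqrt_nonneg _)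
    (integrable_finsetSum s fun i hi => (hg i hi).abs.1) (.of_forall fun x => ?_)
  rw [Real.sqrt_le_left (Finset.sum_nonneg fun i _ => abs_nonneg (g i x))]
  simpa only [sq_abs] using Finset.sum_sq_le_sq_sum_of_nonneg fun i _ => abs_nonneg (g i x)

theorem length_of_rational_curve_le_general
    (n : ℕ) (R s₀ : ℝ) (hs₀ : 0 ≤ s₀)
    (P Q : Fin n → Polynomial ℝ)
    (hP : ∀ i, (P i).degree ≤ 2) (hQ : ∀ i, (Q i).degree ≤ 2)
    (hQne : ∀ i, ∀ s ∈ Set.Icc (0:ℝ) s₀, (Q i).eval s ≠ 0)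
    (α : ℝ → (Fin n → ℝ))
    (hα : ∀ s, ∀ i, α s i = (P i).eval s / (Q i).eval s)
    (hbound : ∀ i, ∀ s ∈ Set.Icc (0:ℝ) s₀, |α s i| ≤ R) :
    ∫ s in (0:ℝ)..s₀,
        Real.sqrt (∑ i, (deriv (fun t => α t i) s) ^ 2) ≤ 8 * n * R := by
  have hαi : ∀ i, (fun t => α t i) = fun t => (P i).eval t / (Q i).eval t :=
    fun i => funext fun t => hα t i
  simp only [hαi]
  have hcoord (i : Fin n) :
      ∫ s in (0:ℝ)..s₀, |deriv (fun t => (P i).eval t / (Q i).eval t) s| ≤ 8 * R :=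
    calc _ ≤ 2 * ((P i).natDegree + (Q i).natDegree) * R :=
          integral_abs_deriv_eval_div_eval_le hs₀ (hQne i) fun s hs => hα s i ▸ hbound i s hs
      _ ≤ 2 * (2 + 2) * R := by
          have hR : 0 ≤ R := (abs_nonneg _).trans (hbound i 0 (left_mem_Icc.2 hs₀))
          gcongr
          · exact_mod_cast natDegree_le_iff_degree_le.2 (hP i)
          · exact_mod_cast natDegree_le_iff_degree_le.2 (hQ i)
      _ = 8 * R := by norm_num
  calc _ ≤ ∑ i, ∫ s in (0:ℝ)..s₀, |deriv (fun t => (P i).eval t / (Q i).eval t) s| :=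
        integral_sqrt_sum_sq_le_sum_integral_abs _ hs₀ fun i _ =>
          (continuousOn_deriv_eval_div_eval (hQne i)).intervalIntegrable_of_Icc hs₀
    _ ≤ ∑ _i : Fin n, 8 * R := Finset.sum_le_sum fun i _ => hcoord i
    _ = 8 * n * R := by
        rw [Finset.sum_const, Finset.card_univ, Fintype.card_fin, nsmul_eq_mul]
        ring

/-- Let `α : [0,s₀] → ℝⁿ` have coordinates `αᵢ = Pᵢ/Qᵢ` with `Pᵢ, Qᵢ` real
polynomials of degree at most `2`, `Qᵢ` nonvanishing on `[0,s₀]`, and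
`|αᵢ(s)| ≤ R` on `[0,s₀]`.  Then the Euclidean length `∫₀^{s₀} ‖α'(s)‖ ds` is
at most `8nR`. -/
theorem length_of_rational_curve_le
    (n : ℕ) (R s₀ : ℝ) (hR : 0 < R) (hs₀ : 0 ≤ s₀)
    (P Q : Fin n → Polynomial ℝ)
    (hP : ∀ i, (P i).degree ≤ 2) (hQ : ∀ i, (Q i).degree ≤ 2)
    (hQne : ∀ i, ∀ s ∈ Set.Icc (0:ℝ) s₀, (Q i).eval s ≠ 0)
    (α : ℝ → (Fin n → ℝ))
    (hα : ∀ s, ∀ i, α s i = (P i).eval s / (Q i).eval s)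
    (hbound : ∀ i, ∀ s ∈ Set.Icc (0:ℝ) s₀, |α s i| ≤ R) :
    ∫ s in (0:ℝ)..s₀,
        Real.sqrt (∑ i, (deriv (fun t => α t i) s) ^ 2) ≤ 8 * n * R :=
  length_of_rational_curve_le_general n R s₀ hs₀ P Q hP hQ hQne α hα hbound
end
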